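/- arXiv:math/0601223 — 7 statements merged into one kernel-verified Lean document; each statement's English description precedes it below -/
import Mathlib

section
/- The line Bx + y − 1 = 0 is invariant under the Newton map N: if y = 1 − Bx and N(x,y) is defined, then the second coordinate N₂(x,y) satisfies N₂(x,y) = 1 − B·N₁(x,y), where N₁(x,y) = x²/(2x−1). -/
/-- The line Bx + y − 1 = 0 is invariant under the Newton map N: if y = 1 − Bx and N(x,y)
is defined, then N₂(x,y) = 1 − B·N₁(x,y), where N₁(x,y) = x²/(2x−1). -/
theorem newton_invariant_line (B x y : ℂ) (hy : y = 1 - B * x)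
    (h : (2 * x - 1) * (B * x + 2 * y - 1) ≠ 0) :
    y * (B * x ^ 2 + 2 * x * y - B * x - y) / ((2 * x - 1) * (B * x + 2 * y - 1)) =
      1 - B * (x ^ 2 / (2 * x - 1)) := by
  have h1 : (2 * x - 1) ≠ 0 := fun e => h (by rw [e]; ring)
  have h2 : (B * x + 2 * y - 1) ≠ 0 := fun e => h (by rw [e]; ring)
  subst hy
  rw [div_eq_iff h]
  have hq : B * (x ^ 2 / (2 * x - 1)) * (2 * x - 1) = B * x ^ 2 := by
    rw [mul_assoc, div_mul_cancel₀ _ h1]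
  linear_combination (B * x + 2 * (1 - B * x) - 1) * hq
end

section
/- Under the map g(x) = x²/(2x−1), the real part of x satisfies: Re(x) < 1/2 implies Re(g(x)) < 1/2, Re(x) > 1/2 implies Re(g(x)) > 1/2, and Re(x) = 1/2 implies Re(g(x)) = 1/2 (when 2x−1 ≠ 0). -/
/-! The map `g x = x ^ 2 / (2 * x - 1)` satisfies `g x - 1 = (x - 1) ^ 2 / (2 * x - 1)`, so
`|g x| / |g x - 1| = (|x| / |x - 1|) ^ 2`: under `x ↦ x / (x - 1)` it becomes `w ↦ w ^ 2`.
Since `|z| ^ 2 - |z - 1| ^ 2 = 2 Re z - 1`, the sign of `Re z - 1/2` is the sign of `|z| - |z - 1|`,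
and squaring the ratio `|x| / |x - 1|` preserves which side of `1` it lies on. -/

open Complex

lemma Complex.normSq_sub_normSq_sub_one (z : ℂ) : normSq z - normSq (z - 1) = 2 * z.re - 1 := by
  simp only [normSq_apply, sub_re, sub_im, one_re, one_im]
  ring

lemma sq_div_two_mul_sub_one_sub_one {x : ℂ} (h : 2 * x - 1 ≠ 0) :
    x ^ 2 / (2 * x - 1) - 1 = (x - 1) ^ 2 / (2 * x - 1) := by
  rw [div_sub_one h]
  ring

lemma normSq_add_normSq_sub_one_pos (x : ℂ) : 0 < normSq x + normSq (x - 1) := by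
  rcases eq_or_ne x 0 with rfl | hx
  · simp
  · exact add_pos_of_pos_of_nonneg (normSq_pos.2 hx) (normSq_nonneg _)

lemma two_mul_re_sq_div_two_mul_sub_one_sub_one {x : ℂ} (h : 2 * x - 1 ≠ 0) :
    2 * (x ^ 2 / (2 * x - 1)).re - 1 =
      (2 * x.re - 1) * ((normSq x + normSq (x - 1)) / normSq (2 * x - 1)) := by
  rw [← normSq_sub_normSq_sub_one, sq_div_two_mul_sub_one_sub_one h, ← normSq_sub_normSq_sub_one]
  simp only [map_div₀, map_pow]
  ring

/-- Under g(x) = x²/(2x−1): Re(x) < 1/2 implies Re(g(x)) < 1/2,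
Re(x) > 1/2 implies Re(g(x)) > 1/2, and Re(x) = 1/2 implies Re(g(x)) = 1/2
(when 2x−1 ≠ 0). -/
theorem half_plane_invariance (x : ℂ) (h : 2 * x - 1 ≠ 0) :
    (x.re < 1 / 2 → (x ^ 2 / (2 * x - 1)).re < 1 / 2) ∧
    (x.re > 1 / 2 → (x ^ 2 / (2 * x - 1)).re > 1 / 2) ∧
    (x.re = 1 / 2 → (x ^ 2 / (2 * x - 1)).re = 1 / 2) := by
  have hc : 0 < (normSq x + normSq (x - 1)) / normSq (2 * x - 1) :=
    div_pos (normSq_add_normSq_sub_one_pos x) (normSq_pos.2 h)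
  have hg := two_mul_re_sq_div_two_mul_sub_one_sub_one h
  refine ⟨fun hx => ?_, fun hx => ?_, fun hx => ?_⟩
  · have := mul_neg_of_neg_of_pos (by linarith : 2 * x.re - 1 < 0) hc
    linarith
  · have := mul_pos (by linarith : 0 < 2 * x.re - 1) hc
    linarith
  · rw [hx] at hg
    linarith
end

section
/- For every x₀ ∈ ℂ with Re(x₀) < 1/2, the iterates of g(x) = x²/(2x−1) starting at x₀ converge to 0. -/
lemma g_conj (z : ℂ) (hz : ‖z‖ < 1) :
    (fun x : ℂ => x ^ 2 / (2 * x - 1)) (z / (z - 1)) = z ^ 2 / (z ^ 2 - 1) := by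
  have h1 : z - 1 ≠ 0 := by
    intro hzz
    have : z = 1 := by linear_combination hzz
    simp [this] at hz
  have h2 : z + 1 ≠ 0 := by
    intro hzz
    have : z = -1 := by linear_combination hzz
    simp [this] at hz
  have h3 : z ^ 2 - 1 ≠ 0 := by
    intro hzz
    have : (z - 1) * (z + 1) = 0 := by linear_combination hzz
    rcases mul_eq_zero.1 this with h | h
    exacts [h1 h, h2 h]
  have h4 : 2 * (z / (z - 1)) - 1 = (z + 1) / (z - 1) := by
    field_simp
    ring
  simp only [h4]
  rw [div_pow, div_div_div_eq,
    div_eq_div_iff (by exact mul_ne_zero (pow_ne_zero 2 h1) h2) h3]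
  ring

/-- For every x₀ with Re(x₀) < 1/2, the iterates of g(x) = x²/(2x−1) starting at x₀
converge to 0. -/
theorem iterates_converge_to_zero (x₀ : ℂ) (h : x₀.re < 1 / 2) :
    Filter.Tendsto (fun n => (fun x : ℂ => x ^ 2 / (2 * x - 1))^[n] x₀)
      Filter.atTop (nhds 0) := by
  set w : ℂ := x₀ / (x₀ - 1) with hw_def
  have hx1 : x₀ - 1 ≠ 0 := by
    intro hx
    have : x₀ = 1 := by linear_combination hx
    rw [this] at h; norm_num at h
  have hw : ‖w‖ < 1 := by
    rw [hw_def, norm_div, div_lt_one (norm_pos_iff.mpr hx1)]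
    have hsq : Complex.normSq x₀ < Complex.normSq (x₀ - 1) := by
      simp only [Complex.normSq_apply, Complex.sub_re, Complex.sub_im,
        Complex.one_re, Complex.one_im]
      nlinarith [h]
    calc ‖x₀‖ = Real.sqrt (Complex.normSq x₀) := Complex.norm_def _
      _ < Real.sqrt (Complex.normSq (x₀ - 1)) := by
          exact Real.sqrt_lt_sqrt (Complex.normSq_nonneg _) hsq
      _ = ‖x₀ - 1‖ := (Complex.norm_def _).symm
  have key : ∀ n : ℕ, (fun x : ℂ => x ^ 2 / (2 * x - 1))^[n] x₀
      = w ^ (2 ^ n) / (w ^ (2 ^ n) - 1) := by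
    intro n
    induction n with
    | zero =>
        simp only [Function.iterate_zero, id_eq, pow_zero, pow_one]
        rw [hw_def]
        field_simp
        ring
    | succ n ih =>
        rw [Function.iterate_succ_apply', ih]
        have habs : ‖w ^ (2 ^ n)‖ < 1 := by
          rw [norm_pow]
          exact pow_lt_one₀ (norm_nonneg _) hw (by positivity)
        have := g_conj (w ^ (2 ^ n)) habs
        simp only at this ⊢
        rw [this, ← pow_mul, pow_succ]
  simp only [key]
  have hwpow : Filter.Tendsto (fun n : ℕ => w ^ (2 ^ n)) Filter.atTop (nhds 0) := by
    have h1 : Filter.Tendsto (fun n : ℕ => w ^ n) Filter.atTop (nhds 0) :=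
      tendsto_pow_atTop_nhds_zero_of_norm_lt_one hw
    exact h1.comp (tendsto_pow_atTop_atTop_of_one_lt one_lt_two)
  have hcont : ContinuousAt (fun z : ℂ => z / (z - 1)) 0 := by
    apply ContinuousAt.div continuousAt_id (by fun_prop)
    norm_num
  have := hcont.tendsto.comp hwpow
  simpa [Function.comp_def] using this
end

section
/- Let τ(x,y) = (x, 1−Bx−y). Then τ is an involution (τ∘τ = id) and τ commutes with the Newton map N: τ(N(x,y)) = N(τ(x,y)) wherever both sides are defined. -/
/-- τ(x,y) = (x, 1−Bx−y) is an involution and commutes with the Newton map: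
τ(N(x,y)) = N(τ(x,y)) wherever both sides are defined. -/
theorem tau_involution_and_symmetry (B : ℂ) :
    (∀ x y : ℂ, (x, 1 - B * x - (1 - B * x - y)) = (x, y)) ∧
    (∀ x y : ℂ, (2 * x - 1) * (B * x + 2 * y - 1) ≠ 0 →
      (x ^ 2 / (2 * x - 1),
        1 - B * (x ^ 2 / (2 * x - 1)) -
          y * (B * x ^ 2 + 2 * x * y - B * x - y) / ((2 * x - 1) * (B * x + 2 * y - 1))) =
      (x ^ 2 / (2 * x - 1),
        (1 - B * x - y) * (B * x ^ 2 + 2 * x * (1 - B * x - y) - B * x - (1 - B * x - y)) /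
          ((2 * x - 1) * (B * x + 2 * (1 - B * x - y) - 1)))) := by
  constructor
  · intro x y; ring_nf
  · intro x y h
    have h1 : (2 * x - 1) ≠ 0 := fun h1 => h (by rw [h1]; ring)
    have h2 : (B * x + 2 * y - 1) ≠ 0 := fun h2 => h (by rw [h2]; ring)
    refine Prod.ext rfl ?_
    have e2 : (2 * x - 1) * (B * x + 2 * (1 - B * x - y) - 1) =
        -((2 * x - 1) * (B * x + 2 * y - 1)) := by ring
    rw [e2]
    have h1' : x * 2 - 1 ≠ 0 := by rwa [mul_comm]
    field_simp
    ring
end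

section
/- In the coordinates z = x/(x−1), w = y/(y−1), the Newton map takes the form (z,w) ↦ (z², (w²+(Bw−Bw²)z−w²z²)/(1+(B−Bw)z+(Bw²+B−1−2Bw)z²)); that is, this formula agrees with the conjugation of N by the coordinate change (x,y) ↦ (x/(x−1), y/(y−1)) wherever both are defined. -/
set_option maxHeartbeats 2000000

private lemma div_div_cancel_aux (a b c : ℂ) (h : c ≠ 0) : a / c / (b / c) = a / b := by
  rw [div_div_div_eq, mul_comm a c]
  exact mul_div_mul_left _ _ h

/-- In the coordinates z = x/(x−1), w = y/(y−1), the Newton map takes the form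
(z,w) ↦ (z², (w²+(Bw−Bw²)z−w²z²)/(1+(B−Bw)z+(Bw²+B−1−2Bw)z²)). -/
theorem newton_in_zw_coordinates (B x y : ℂ) (hx : x ≠ 1) (hy : y ≠ 1)
    (hdom : (2 * x - 1) * (B * x + 2 * y - 1) ≠ 0)
    (hN2 : y * (B * x ^ 2 + 2 * x * y - B * x - y) /
        ((2 * x - 1) * (B * x + 2 * y - 1)) ≠ 1)
    (hden : 1 + (B - B * (y / (y - 1))) * (x / (x - 1)) +
        (B * (y / (y - 1)) ^ 2 + B - 1 - 2 * B * (y / (y - 1))) * (x / (x - 1)) ^ 2 ≠ 0) :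
    ((x ^ 2 / (2 * x - 1)) / (x ^ 2 / (2 * x - 1) - 1),
      (y * (B * x ^ 2 + 2 * x * y - B * x - y) / ((2 * x - 1) * (B * x + 2 * y - 1))) /
        (y * (B * x ^ 2 + 2 * x * y - B * x - y) / ((2 * x - 1) * (B * x + 2 * y - 1)) - 1)) =
    ((x / (x - 1)) ^ 2,
      ((y / (y - 1)) ^ 2 + (B * (y / (y - 1)) - B * (y / (y - 1)) ^ 2) * (x / (x - 1)) -
          (y / (y - 1)) ^ 2 * (x / (x - 1)) ^ 2) /
        (1 + (B - B * (y / (y - 1))) * (x / (x - 1)) +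
          (B * (y / (y - 1)) ^ 2 + B - 1 - 2 * B * (y / (y - 1))) * (x / (x - 1)) ^ 2)) := by
  have h1 : (2 * x - 1) ≠ 0 := left_ne_zero_of_mul hdom
  have hx1 : x - 1 ≠ 0 := sub_ne_zero.mpr hx
  have hy1 : y - 1 ≠ 0 := sub_ne_zero.mpr hy
  have hN2' := sub_ne_zero.mpr hN2
  set p := y * (B * x ^ 2 + 2 * x * y - B * x - y) with hp
  set d := (2 * x - 1) * (B * x + 2 * y - 1) with hd
  have hc : (x - 1) ^ 2 * (y - 1) ^ 2 ≠ 0 :=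
    mul_ne_zero (pow_ne_zero _ hx1) (pow_ne_zero _ hy1)
  -- numerator and denominator of the RHS second coordinate as single fractions
  have enum : (y / (y - 1)) ^ 2 + (B * (y / (y - 1)) - B * (y / (y - 1)) ^ 2) * (x / (x - 1)) -
      (y / (y - 1)) ^ 2 * (x / (x - 1)) ^ 2 =
      (y ^ 2 - 2 * x * y ^ 2 + B * x * y - B * x ^ 2 * y) / ((x - 1) ^ 2 * (y - 1) ^ 2) := by
    field_simp
    ring
  have eden : 1 + (B - B * (y / (y - 1))) * (x / (x - 1)) +
      (B * (y / (y - 1)) ^ 2 + B - 1 - 2 * B * (y / (y - 1))) * (x / (x - 1)) ^ 2 =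
      (1 - 2 * y + y ^ 2 - 2 * x + 4 * x * y - 2 * x * y ^ 2 - B * x + B * x * y
        + 2 * B * x ^ 2 - B * x ^ 2 * y) / ((x - 1) ^ 2 * (y - 1) ^ 2) := by
    field_simp
    ring
  have hPd : (1 - 2 * y + y ^ 2 - 2 * x + 4 * x * y - 2 * x * y ^ 2 - B * x + B * x * y
      + 2 * B * x ^ 2 - B * x ^ 2 * y) ≠ 0 := by
    intro h
    apply hden
    rw [eden, h, zero_div]
  -- LHS second coordinate simplification
  have eL : p / d - 1 = (p - d) / d := by
    rw [sub_div, div_self hdom]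
  have hpd : p - d ≠ 0 := by
    intro h
    apply hN2'
    rw [eL, h, zero_div]
  refine Prod.ext ?_ ?_ <;> simp only
  · have e1 : x ^ 2 / (2 * x - 1) - 1 = (x - 1) ^ 2 / (2 * x - 1) := by
      rw [eq_div_iff h1, sub_mul, div_mul_cancel₀ _ h1]
      ring
    rw [e1, div_div_cancel_aux _ _ _ h1, div_pow]
  · rw [enum, eden, div_div_cancel_aux _ _ _ hc, eL, div_div_cancel_aux _ _ _ hdom,
      div_eq_div_iff hpd hPd]
    ring
end

section
/- The map induced by the Newton map (in (z,w)-coordinates) on the exceptional divisor of the blow-up at (0,0), computed in the chart m = z/w as the limit as w → 0 of the quotient of coordinates, is s(m) = m²/(1+Bm); precisely, for fixed m with 1+Bm ≠ 0, lim_{w→0} N̂₁(mw, w)/N̂₂(mw, w) = m²/(1+Bm), where N̂(z,w) = (z², (w²+(Bw−Bw²)z−w²z²)/(1+(B−Bw)z+(Bw²+B−1−2Bw)z²)). -/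
/-! Along z = mw the numerator of N̂₂ is w²(1 + Bm − Bmw − m²w²), so the factor w²
cancels against N̂₁ = m²w². What remains is continuous at w = 0, where it equals
m²/(1 + Bm). -/

open Filter Topology

theorem newton_snd_num_eq (B m w : ℂ) :
    w ^ 2 + (B * w - B * w ^ 2) * (m * w) - w ^ 2 * (m * w) ^ 2
      = w ^ 2 * (1 + B * m - B * m * w - m ^ 2 * w ^ 2) := by
  ring

theorem mul_sq_div_sq_mul_div {K : Type*} [Field K] (a d n : K) {w : K} (hw : w ≠ 0) :
    (a * w) ^ 2 / (w ^ 2 * d / n) = a ^ 2 * n / d := by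
  rw [div_div_eq_mul_div, mul_pow, mul_right_comm, mul_comm (w ^ 2) d,
    mul_div_mul_right _ _ (pow_ne_zero 2 hw)]

/-- The map induced on the exceptional divisor of the blow-up at (0,0) (in (z,w)
coordinates, chart m = z/w) is s(m) = m²/(1+Bm):
for 1+Bm ≠ 0, lim_{w→0} N̂₁(mw,w)/N̂₂(mw,w) = m²/(1+Bm). -/
theorem exceptional_divisor_map_zw (B m : ℂ) (hm : 1 + B * m ≠ 0) :
    Filter.Tendsto
      (fun w : ℂ =>
        (m * w) ^ 2 /
          ((w ^ 2 + (B * w - B * w ^ 2) * (m * w) - w ^ 2 * (m * w) ^ 2) /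
            (1 + (B - B * w) * (m * w) + (B * w ^ 2 + B - 1 - 2 * B * w) * (m * w) ^ 2)))
      (nhdsWithin 0 {0}ᶜ) (nhds (m ^ 2 / (1 + B * m))) := by
  set den : ℂ → ℂ := fun w =>
    1 + (B - B * w) * (m * w) + (B * w ^ 2 + B - 1 - 2 * B * w) * (m * w) ^ 2
  have hreduced :
      ContinuousAt (fun w => m ^ 2 * den w / (1 + B * m - B * m * w - m ^ 2 * w ^ 2)) 0 :=
    (by fun_prop : ContinuousAt (fun w => m ^ 2 * den w) 0).div (by fun_prop) (by simpa using hm)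
  have hvalue : m ^ 2 * den 0 / (1 + B * m - B * m * 0 - m ^ 2 * 0 ^ 2) = m ^ 2 / (1 + B * m) := by
    simp [den]
  refine (hvalue ▸ hreduced.tendsto.mono_left nhdsWithin_le_nhds).congr' ?_
  filter_upwards [self_mem_nhdsWithin] with w (hw : w ≠ 0)
  rw [newton_snd_num_eq, mul_sq_div_sq_mul_div _ _ _ hw]
end

section
/- The map induced by the Newton map N on the exceptional divisor of the blow-up at the root r₁ = (0,0), computed in the chart m = y/x as lim_{x→0} N₂(x, mx)/N₁(x, mx), equals s(m) = m(B+m) = m² + Bm. -/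
/-- The map induced by N on the exceptional divisor of the blow-up at r₁ = (0,0), in the
chart m = y/x, is s(m) = m(B+m): lim_{x→0} N₂(x,mx)/N₁(x,mx) = m² + Bm. -/
theorem exceptional_divisor_map_at_r1 (B m : ℂ) :
    Filter.Tendsto
      (fun x : ℂ =>
        (m * x * (B * x ^ 2 + 2 * x * (m * x) - B * x - m * x) /
            ((2 * x - 1) * (B * x + 2 * (m * x) - 1))) /
          (x ^ 2 / (2 * x - 1)))
      (nhdsWithin 0 {0}ᶜ) (nhds (m ^ 2 + B * m)) := by
  have hg : Filter.Tendsto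
      (fun x : ℂ => m * (B * x + 2 * (m * x) - B - m) / (B * x + 2 * (m * x) - 1))
      (nhdsWithin 0 {0}ᶜ) (nhds (m ^ 2 + B * m)) := by
    have hc : ContinuousAt
        (fun x : ℂ => m * (B * x + 2 * (m * x) - B - m) / (B * x + 2 * (m * x) - 1)) 0 := by
      apply ContinuousAt.div
      · fun_prop
      · fun_prop
      · norm_num
    have h0 : (fun x : ℂ => m * (B * x + 2 * (m * x) - B - m) / (B * x + 2 * (m * x) - 1)) 0
        = m ^ 2 + B * m := by
      simp
      ring
    have ht := hc.continuousWithinAt (s := {(0:ℂ)}ᶜ)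
    unfold ContinuousWithinAt at ht
    rw [h0] at ht
    exact ht
  refine hg.congr' ?_
  have h1 : ∀ᶠ x in nhdsWithin (0:ℂ) {0}ᶜ, 2 * x - 1 ≠ 0 := by
    have : Filter.Tendsto (fun x : ℂ => 2 * x - 1) (nhdsWithin 0 {0}ᶜ) (nhds (-1)) := by
      have : ContinuousAt (fun x : ℂ => 2 * x - 1) 0 := by fun_prop
      have ht := this.continuousWithinAt (s := {(0:ℂ)}ᶜ)
      unfold ContinuousWithinAt at ht
      simpa using ht
    exact this.eventually_ne (by norm_num)
  have h2 : ∀ᶠ x in nhdsWithin (0:ℂ) {0}ᶜ, B * x + 2 * (m * x) - 1 ≠ 0 := by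
    have : Filter.Tendsto (fun x : ℂ => B * x + 2 * (m * x) - 1) (nhdsWithin 0 {0}ᶜ)
        (nhds (-1)) := by
      have : ContinuousAt (fun x : ℂ => B * x + 2 * (m * x) - 1) 0 := by fun_prop
      have ht := this.continuousWithinAt (s := {(0:ℂ)}ᶜ)
      unfold ContinuousWithinAt at ht
      simpa using ht
    exact this.eventually_ne (by norm_num)
  have h3 : ∀ᶠ x in nhdsWithin (0:ℂ) {0}ᶜ, x ≠ 0 := self_mem_nhdsWithin
  filter_upwards [h1, h2, h3] with x hx1 hx2 hx3
  rw [div_div_eq_mul_div, div_mul_eq_mul_div, div_div, div_eq_div_iff hx2 (mul_ne_zero (mul_ne_zero hx1 hx2) (pow_ne_zero 2 hx3))]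
  ring
end
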